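/- Consider a two-level system with Hermitian Hamiltonian Ĥ = [[h_S, h_P],[conj(h_P), h_R]] ∈ M_2(ℂ) (h_S, h_R ∈ ℝ, h_P ∈ ℂ) and a single noise operator L̂ = [[l_S, l_P],[l_Q, l_R]] ∈ M_2(ℂ), with Lindblad generator 𝓛(ρ) = −i[Ĥ, ρ] + L̂ρL̂† − ½(L̂†L̂ρ + ρL̂†L̂). The pure state ρ_d = diag(1, 0) is a globally attractive invariant state — i.e. 𝓛(ρ_d) = 0 and exp(t𝓛)(ρ_0) → ρ_d as t → +∞ for every density matrix ρ_0 — if and only if: i·h_P − ½·conj(l_S)·l_P = 0, l_Q = 0, and l_P ≠ 0. -/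

import Mathlib

/-!
If `ρ_d` is invariant, the `(1,1)` and `(0,1)` entries of `𝓛 ρ_d` force `l_Q = 0` and
`i h_P = ½ l_S* l_P`; if moreover `l_P = 0`, then `h_P = 0`, all operators are diagonal and
`diag(0, 1)` is a second stationary state, so `ρ_d` is not attractive. Conversely, under the
three conditions `𝓛` is triangular in the matrix entries: the excited population decays at rate
`|l_P|²` into the ground state, and each coherence obeys a scalar linear equation with decay
rate `(|l_S - l_R|² + |l_P|²) / 2`, forced by that population. Solving these equations explicitly
and identifying the solution with `exp(t𝓛) ρ₀` by uniqueness for linear ODEs shows that every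
`ρ₀` of trace one flows to `ρ_d`.
-/

open Matrix Filter
open scoped ComplexOrder

attribute [local instance] Matrix.frobeniusNormedAddCommGroup Matrix.frobeniusNormedSpace

noncomputable section

/-- A density matrix: positive semidefinite (hence Hermitian) with unit trace. -/
def IsDensityMatrix {N : ℕ} (ρ : Matrix (Fin N) (Fin N) ℂ) : Prop :=
  ρ.PosSemidef ∧ ρ.trace = 1

/-- The Lindblad generator associated with a Hamiltonian `H` and noise operators. -/
def lindblad {N m : ℕ} (H : Matrix (Fin N) (Fin N) ℂ)
    (L : Fin m → Matrix (Fin N) (Fin N) ℂ) :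
    Matrix (Fin N) (Fin N) ℂ →ₗ[ℂ] Matrix (Fin N) (Fin N) ℂ :=
  (-Complex.I) • (LinearMap.mulLeft ℂ H - LinearMap.mulRight ℂ H)
    + ∑ k : Fin m,
      ((LinearMap.mulRight ℂ (L k)ᴴ).comp (LinearMap.mulLeft ℂ (L k))
        - (1 / 2 : ℂ) •
          (LinearMap.mulLeft ℂ ((L k)ᴴ * L k) + LinearMap.mulRight ℂ ((L k)ᴴ * L k)))

/-- The Lindblad generator as a continuous linear endomorphism. -/
def lindbladCLM {N m : ℕ} (H : Matrix (Fin N) (Fin N) ℂ)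
    (L : Fin m → Matrix (Fin N) (Fin N) ℂ) :
    Matrix (Fin N) (Fin N) ℂ →L[ℂ] Matrix (Fin N) (Fin N) ℂ :=
  LinearMap.toContinuousLinearMap (lindblad H L)

theorem hasDerivAt_cexp_mul_ofReal (μ : ℂ) (t : ℝ) :
    HasDerivAt (fun s : ℝ => Complex.exp (μ * s)) (μ * Complex.exp (μ * t)) t := by
  simpa [mul_comm] using ((hasDerivAt_id t).ofReal_comp.const_mul μ).cexp

theorem tendsto_pow_mul_cexp_mul_ofReal_atTop_zero (n : ℕ) {μ : ℂ} (hμ : μ.re < 0) :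
    Tendsto (fun t : ℝ => (t : ℂ) ^ n * Complex.exp (μ * t)) atTop (nhds 0) := by
  rw [tendsto_zero_iff_norm_tendsto_zero]
  have hdecay := (isLittleO_pow_exp_pos_mul_atTop n (neg_pos.2 hμ)).tendsto_div_nhds_zero
  refine hdecay.congr' ?_
  filter_upwards [eventually_ge_atTop 0] with t ht
  rw [norm_mul, norm_pow, Complex.norm_real, Real.norm_of_nonneg ht, Complex.norm_exp,
    div_eq_mul_inv, ← Real.exp_neg]
  congr 2
  simp

theorem exists_hasDerivAt_forced_tendsto_zero {μ κ : ℂ} (hμ : μ.re < 0) (hκ : κ.re < 0) (ν : ℂ) :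
    ∃ k : ℝ → ℂ, k 0 = 0 ∧
      (∀ t : ℝ, HasDerivAt k (μ * k t + ν * Complex.exp (κ * t)) t) ∧
      Tendsto k atTop (nhds 0) := by
  by_cases hres : μ = κ
  · subst hres
    refine ⟨fun t => ν * ((t : ℂ) * Complex.exp (μ * t)), by simp, fun t => ?_, ?_⟩
    · refine ((((hasDerivAt_id t).ofReal_comp).mul
        (hasDerivAt_cexp_mul_ofReal μ t)).const_mul ν).congr_deriv ?_
      simp only [id_eq, Complex.ofReal_one]
      ring
    · simpa using (tendsto_pow_mul_cexp_mul_ofReal_atTop_zero 1 hμ).const_mul ν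
  · have hne : μ - κ ≠ 0 := sub_ne_zero.2 hres
    refine ⟨fun t => ν / (μ - κ) * (Complex.exp (μ * t) - Complex.exp (κ * t)), by simp,
      fun t => ?_, ?_⟩
    · refine (((hasDerivAt_cexp_mul_ofReal μ t).sub
        (hasDerivAt_cexp_mul_ofReal κ t)).const_mul (ν / (μ - κ))).congr_deriv ?_
      field_simp
      ring
    · simpa using ((tendsto_pow_mul_cexp_mul_ofReal_atTop_zero 0 hμ).sub
        (tendsto_pow_mul_cexp_mul_ofReal_atTop_zero 0 hκ)).const_mul (ν / (μ - κ))

section LinearODE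

variable {E : Type*} [NormedAddCommGroup E] [NormedSpace ℂ E] [CompleteSpace E]

/-- Uniqueness for `y' = A y`: the function `s ↦ exp ((t - s) • A) (y s)` has zero derivative. -/
theorem exp_smul_apply_eq_of_hasDerivAt (A : E →L[ℂ] E) {y : ℝ → E}
    (hy : ∀ t, HasDerivAt y (A (y t)) t) (t : ℝ) :
    NormedSpace.exp (t • A) (y 0) = y t := by
  have hflow : ∀ s : ℝ, HasDerivAt (fun u : ℝ => NormedSpace.exp ((t - u) • A) (y u)) 0 s := by
    intro s
    have hexp := (ContinuousLinearMap.restrictScalarsL ℂ E E ℝ ℝ).hasFDerivAt.comp_hasDerivAt s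
      ((hasDerivAt_exp_smul_const A (t - s)).scomp s ((hasDerivAt_id s).const_sub t))
    refine (hexp.clm_apply (hy s)).congr_deriv ?_
    simp
  simpa using is_const_of_deriv_eq_zero (fun s => (hflow s).differentiableAt)
    (fun s => (hflow s).deriv) 0 t

theorem exp_smul_apply_eq_self_of_apply_eq_zero (A : E →L[ℂ] E) {x : E} (hx : A x = 0)
    (t : ℝ) : NormedSpace.exp (t • A) x = x :=
  exp_smul_apply_eq_of_hasDerivAt A (y := fun _ => x)
    (fun _ => by simpa [hx] using hasDerivAt_const _ x) t

end LinearODE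

theorem Matrix.hasDerivAt_of_entries {m n : Type*} [Fintype m] [Fintype n] [DecidableEq m]
    [DecidableEq n] {f : ℝ → Matrix m n ℂ} {f' : Matrix m n ℂ} {t : ℝ}
    (h : ∀ i j, HasDerivAt (fun u => f u i j) (f' i j) t) : HasDerivAt f f' t := by
  have hsum : ∀ M : Matrix m n ℂ, M = ∑ i, ∑ j, M i j • Matrix.single i j (1 : ℂ) := fun M => by
    simpa [Matrix.smul_single] using Matrix.matrix_eq_sum_single M
  rw [funext fun u => hsum (f u), hsum f']
  exact HasDerivAt.fun_sum fun i _ => HasDerivAt.fun_sum fun j _ => (h i j).smul_const _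

theorem exists_solution_tendsto_of_upper_triangular
    {A : Matrix (Fin 2) (Fin 2) ℂ → Matrix (Fin 2) (Fin 2) ℂ} {γ μ₁ μ₂ ν₁ ν₂ : ℂ}
    (hA : ∀ ρ, A ρ = !![γ * ρ 1 1, μ₁ * ρ 0 1 + ν₁ * ρ 1 1; μ₂ * ρ 1 0 + ν₂ * ρ 1 1, -(γ * ρ 1 1)])
    (hγ : 0 < γ.re) (hμ₁ : μ₁.re < 0) (hμ₂ : μ₂.re < 0)
    {ρ₀ : Matrix (Fin 2) (Fin 2) ℂ} (hρ₀ : ρ₀.trace = 1) :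
    ∃ y : ℝ → Matrix (Fin 2) (Fin 2) ℂ, y 0 = ρ₀ ∧ (∀ t, HasDerivAt y (A (y t)) t) ∧
      Tendsto y atTop (nhds !![1, 0; 0, 0]) := by
  have hκ : (-γ).re < 0 := by simpa using hγ
  obtain ⟨k₁, hk₁0, hk₁, hk₁lim⟩ := exists_hasDerivAt_forced_tendsto_zero hμ₁ hκ ν₁
  obtain ⟨k₂, hk₂0, hk₂, hk₂lim⟩ := exists_hasDerivAt_forced_tendsto_zero hμ₂ hκ ν₂
  set e : ℂ → ℝ → ℂ := fun μ t => Complex.exp (μ * t)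
  refine ⟨fun t => !![ρ₀ 0 0 + (1 - e (-γ) t) * ρ₀ 1 1, e μ₁ t * ρ₀ 0 1 + k₁ t * ρ₀ 1 1;
       e μ₂ t * ρ₀ 1 0 + k₂ t * ρ₀ 1 1, e (-γ) t * ρ₀ 1 1], ?_, fun t => ?_, ?_⟩
  · ext i j; fin_cases i <;> fin_cases j <;> simp [e, hk₁0, hk₂0]
  · rw [hA]
    refine Matrix.hasDerivAt_of_entries fun i j => ?_
    fin_cases i <;> fin_cases j <;> simp only [Fin.zero_eta, Fin.mk_one, Matrix.of_apply,
      Matrix.cons_val', Matrix.cons_val_zero, Matrix.cons_val_one, Matrix.empty_val',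
      Matrix.cons_val_fin_one]
    · exact ((((hasDerivAt_cexp_mul_ofReal (-γ) t).const_sub 1).mul_const _).const_add
        _).congr_deriv (by ring)
    · exact (((hasDerivAt_cexp_mul_ofReal μ₁ t).mul_const _).add
        ((hk₁ t).mul_const _)).congr_deriv (by ring)
    · exact (((hasDerivAt_cexp_mul_ofReal μ₂ t).mul_const _).add
        ((hk₂ t).mul_const _)).congr_deriv (by ring)
    · exact ((hasDerivAt_cexp_mul_ofReal (-γ) t).mul_const _).congr_deriv (by ring)
  · have he : ∀ {μ : ℂ}, μ.re < 0 → Tendsto (e μ) atTop (nhds 0) := fun hμ => by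
      simpa using tendsto_pow_mul_cexp_mul_ofReal_atTop_zero 0 hμ
    refine tendsto_pi_nhds.2 fun i => tendsto_pi_nhds.2 fun j => ?_
    fin_cases i <;> fin_cases j <;> simp only [Fin.zero_eta, Fin.mk_one, Matrix.of_apply,
      Matrix.cons_val', Matrix.cons_val_zero, Matrix.cons_val_one, Matrix.empty_val',
      Matrix.cons_val_fin_one]
    · have := (tendsto_const_nhds (x := ρ₀ 0 0)).add
        (((tendsto_const_nhds (x := (1 : ℂ))).sub (he hκ)).mul_const (ρ₀ 1 1))
      rwa [sub_zero, one_mul, ← Matrix.trace_fin_two, hρ₀] at this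
    · simpa using ((he hμ₁).mul_const (ρ₀ 0 1)).add (hk₁lim.mul_const (ρ₀ 1 1))
    · simpa using ((he hμ₂).mul_const (ρ₀ 1 0)).add (hk₂lim.mul_const (ρ₀ 1 1))
    · simpa using (he hκ).mul_const (ρ₀ 1 1)

theorem lindblad_apply {N m : ℕ} (H : Matrix (Fin N) (Fin N) ℂ)
    (L : Fin m → Matrix (Fin N) (Fin N) ℂ) (ρ : Matrix (Fin N) (Fin N) ℂ) :
    lindblad H L ρ = (-Complex.I) • (H * ρ - ρ * H) +
      ∑ k, (L k * ρ * (L k)ᴴ - (1 / 2 : ℂ) • ((L k)ᴴ * L k * ρ + ρ * ((L k)ᴴ * L k))) := by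
  simp [lindblad, Matrix.mul_assoc]

theorem lindblad_diagonal_apply_diagonal {N m : ℕ} (h : Fin N → ℂ) (l : Fin m → Fin N → ℂ)
    (p : Fin N → ℂ) :
    lindblad (Matrix.diagonal h) (fun k => Matrix.diagonal (l k)) (Matrix.diagonal p) = 0 := by
  simp only [lindblad_apply, Matrix.diagonal_conjTranspose, Matrix.diagonal_mul_diagonal,
    mul_comm (h _), sub_self, smul_zero, zero_add]
  refine Finset.sum_eq_zero fun k _ => ?_
  rw [Matrix.diagonal_add, ← Matrix.diagonal_smul, Matrix.diagonal_sub, ← Matrix.diagonal_zero]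
  congr 1
  ext i
  simp only [Pi.smul_apply, smul_eq_mul]
  ring

theorem isDensityMatrix_diagonal {N : ℕ} {p : Fin N → ℂ} (hp : 0 ≤ p) (hp₁ : ∑ i, p i = 1) :
    IsDensityMatrix (Matrix.diagonal p) :=
  ⟨Matrix.PosSemidef.diagonal hp, by rw [Matrix.trace_diagonal, hp₁]⟩

theorem Matrix.conjTranspose_fin_two_of {α : Type*} [Star α] (a b c d : α) :
    !![a, b; c, d]ᴴ = !![star a, star c; star b, star d] := by
  ext i j; fin_cases i <;> fin_cases j <;> rfl

section TwoLevel

variable (hS hR : ℝ) (hP lS lP lQ lR : ℂ)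

theorem lindblad_two_level_apply_ground_eq_zero_iff :
    lindblad !![(hS : ℂ), hP; (starRingEnd ℂ) hP, (hR : ℂ)]
        (fun _ : Fin 1 => !![lS, lP; lQ, lR]) !![(1 : ℂ), 0; 0, 0] = 0 ↔
      lQ = 0 ∧ Complex.I * hP - (1 / 2 : ℂ) * (starRingEnd ℂ) lS * lP = 0 := by
  rw [lindblad_apply, Fin.sum_univ_one, Matrix.conjTranspose_fin_two_of]
  simp only [Matrix.mul_fin_two]
  rw [← Matrix.ext_iff]
  simp only [mul_one, mul_zero, add_zero, one_mul, zero_mul, of_sub_of, sub_cons, head_cons,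
    sub_self, tail_cons, zero_sub, zero_empty, sub_zero, neg_smul, smul_of, smul_cons, smul_eq_mul,
    mul_neg, smul_empty, smul_zero, neg_of, neg_cons, neg_zero, neg_neg, neg_empty, RCLike.star_def,
    one_div, of_add_of, add_cons, zero_add, empty_add_empty, Matrix.add_apply, of_apply, cons_val',
    cons_val_fin_one, Matrix.zero_apply, Fin.forall_fin_two, Fin.isValue, cons_val_zero,
    cons_val_one, Pi.zero_apply, mul_eq_zero, map_eq_zero, or_self]
  constructor
  · rintro ⟨⟨-, h⟩, -, rfl⟩
    simp only [map_zero, mul_zero, zero_mul, add_zero] at h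
    exact ⟨rfl, by linear_combination h⟩
  · rintro ⟨rfl, h⟩
    have h' := congrArg (starRingEnd ℂ) h
    simp only [map_sub, map_mul, Complex.conj_I, map_inv₀, map_ofNat, Complex.conj_conj,
      map_zero] at h'
    simp only [map_zero, zero_mul, mul_zero, add_zero, and_true]
    exact ⟨⟨by ring, by linear_combination h⟩, by linear_combination h'⟩

theorem lindblad_two_level_apply_of_ground_invariant
    (hcond : Complex.I * hP - (1 / 2 : ℂ) * (starRingEnd ℂ) lS * lP = 0) {γ μ ν : ℂ}
    (hγ : γ = starRingEnd ℂ lP * lP)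
    (hμ : μ = Complex.I * (hR - hS) + lS * starRingEnd ℂ lR
      - (starRingEnd ℂ lS * lS + starRingEnd ℂ lP * lP + starRingEnd ℂ lR * lR) / 2)
    (hν : ν = lP * (starRingEnd ℂ lR - starRingEnd ℂ lS)) (ρ : Matrix (Fin 2) (Fin 2) ℂ) :
    lindblad !![(hS : ℂ), hP; (starRingEnd ℂ) hP, (hR : ℂ)]
        (fun _ : Fin 1 => !![lS, lP; 0, lR]) ρ =
      !![γ * ρ 1 1, μ * ρ 0 1 + ν * ρ 1 1;
        starRingEnd ℂ μ * ρ 1 0 + starRingEnd ℂ ν * ρ 1 1, -(γ * ρ 1 1)] := by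
  obtain rfl : hP = -Complex.I * (starRingEnd ℂ lS * lP / 2) := by
    linear_combination (-Complex.I) * hcond + hP * Complex.I_sq
  subst hγ hμ ν
  rw [lindblad_apply, Fin.sum_univ_one, Matrix.conjTranspose_fin_two_of, Matrix.eta_fin_two ρ]
  simp only [Matrix.mul_fin_two]
  ext i j
  fin_cases i <;> fin_cases j <;>
    simp only [Fin.zero_eta, Fin.mk_one, of_sub_of, of_add_of, smul_of, sub_cons, add_cons,
      smul_cons, neg_of, neg_cons, head_cons, tail_cons, zero_empty, smul_empty, neg_empty,
      empty_add_empty, of_apply, cons_val', cons_val_fin_one, cons_val_zero, cons_val_one,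
      Matrix.add_apply, RCLike.star_def, star_zero, map_neg, map_mul, map_div₀, map_ofNat, map_sub,
      map_add, Complex.conj_I, Complex.conj_ofReal, RingHomCompTriple.comp_apply, RingHom.id_apply,
      smul_eq_mul, neg_smul, one_div, mul_zero, zero_mul, add_zero, zero_add, sub_self] <;>
    ring_nf <;> simp only [Complex.I_sq] <;> ring

end TwoLevel

-- The real part is `-(‖a - b‖² + ‖c‖²) / 2`.
theorem re_coherence_rate_neg (x : ℝ) {a b c : ℂ} (hc : c ≠ 0) :
    (Complex.I * x + a * starRingEnd ℂ b
      - (starRingEnd ℂ a * a + starRingEnd ℂ c * c + starRingEnd ℂ b * b) / 2).re < 0 := by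
  have hc' := Complex.normSq_pos.2 hc
  simp only [Complex.normSq_apply] at hc'
  simp only [Complex.sub_re, Complex.add_re, Complex.mul_re, Complex.I_re, Complex.I_im,
    Complex.ofReal_re, Complex.ofReal_im, Complex.conj_re, Complex.conj_im, Complex.div_ofNat_re]
  nlinarith [sq_nonneg (a.re - b.re), sq_nonneg (a.im - b.im)]

/-- For a two-level system with Hamiltonian `Ĥ = [[h_S, h_P], [h_P*, h_R]]` and a single
noise operator `L̂ = [[l_S, l_P], [l_Q, l_R]]`, the pure state `ρ_d = diag(1, 0)` is a
globally attractive invariant state of the Lindblad equation if and only if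
`i h_P − ½ l_S* l_P = 0`, `l_Q = 0` and `l_P ≠ 0`. -/
theorem two_level_globally_attractive_iff
    (hS hR : ℝ) (hP lS lP lQ lR : ℂ) :
    (lindblad !![(hS : ℂ), hP; (starRingEnd ℂ) hP, (hR : ℂ)]
        (fun _ : Fin 1 => !![lS, lP; lQ, lR]) !![(1 : ℂ), 0; 0, 0] = 0 ∧
      ∀ ρ0 : Matrix (Fin 2) (Fin 2) ℂ, IsDensityMatrix ρ0 →
        Tendsto
          (fun t : ℝ =>
            @NormedSpace.exp _ _ _
              (@NonUnitalSeminormedRing.toIsTopologicalRing _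
                ContinuousLinearMap.toNormedRing.toNonUnitalNormedRing.toNonUnitalSeminormedRing)
              (t • lindbladCLM !![(hS : ℂ), hP; (starRingEnd ℂ) hP, (hR : ℂ)]
                (fun _ : Fin 1 => !![lS, lP; lQ, lR])) ρ0)
          atTop (nhds !![(1 : ℂ), 0; 0, 0])) ↔
      (Complex.I * hP - (1 / 2 : ℂ) * (starRingEnd ℂ) lS * lP = 0 ∧ lQ = 0 ∧ lP ≠ 0) := by
  rw [lindblad_two_level_apply_ground_eq_zero_iff]
  constructor
  · rintro ⟨⟨rfl, hcond⟩, hconv⟩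
    refine ⟨hcond, rfl, ?_⟩
    rintro rfl
    obtain rfl : hP = 0 := by simpa using hcond
    have hfix : lindbladCLM !![(hS : ℂ), 0; (starRingEnd ℂ) 0, (hR : ℂ)]
        (fun _ : Fin 1 => !![lS, 0; 0, lR]) (Matrix.diagonal ![0, 1]) = 0 := by
      simpa [lindbladCLM, Matrix.diagonal_fin_two] using
        lindblad_diagonal_apply_diagonal ![(hS : ℂ), hR] (fun _ => ![lS, lR]) ![0, 1]
    have hlim := hconv (Matrix.diagonal ![0, 1])
      (isDensityMatrix_diagonal (by simp [Pi.le_def, Fin.forall_fin_two]) (by simp))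
    have hground : Matrix.diagonal ![0, 1] = !![(1 : ℂ), 0; 0, 0] :=
      tendsto_nhds_unique tendsto_const_nhds
        (hlim.congr (exp_smul_apply_eq_self_of_apply_eq_zero _ hfix))
    simpa using congrFun₂ hground 0 0
  · rintro ⟨hcond, rfl, hlP⟩
    refine ⟨⟨rfl, hcond⟩, fun ρ₀ hρ₀ => ?_⟩
    have hγ : 0 < (starRingEnd ℂ lP * lP).re :=
      (Complex.normSq_pos.2 hlP).trans_eq (by simp [Complex.mul_re, Complex.normSq_apply])
    have hμ := re_coherence_rate_neg (hR - hS) (a := lS) (b := lR) hlP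
    obtain ⟨y, rfl, hy, hlim⟩ := exists_solution_tendsto_of_upper_triangular
      (lindblad_two_level_apply_of_ground_invariant hS hR hP lS lP lR hcond rfl
        (by push_cast; rfl) rfl)
      hγ hμ (by rwa [Complex.conj_re]) hρ₀.2
    exact hlim.congr fun t => (exp_smul_apply_eq_of_hasDerivAt _ hy t).symm
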